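/- arXiv:1907.05825 — 3 statements merged into one kernel-verified Lean document; each statement's English description precedes it below -/
import Mathlib

section
/- Let $T_q$ be the homogeneous tree of degree $q+1 \geq 3$ with vertex set $V$ and root $o$. If $X \subseteq V$ has positive upper density at some vertex $x \in V$, then $X$ has positive upper density at every vertex $y \in V$; in fact $d^*(X,y) \geq (2(q+q^{-1}))^{-d(x,y)} \, d^*(X,x)$. -/
open Filter

/-- The sphere of radius `n` about `x` in a graph. -/
def gSphere {V : Type*} (G : SimpleGraph V) (x : V) (n : ℕ) : Set V :=
  {y | G.dist x y = n}

/-- Upper density of `X` with respect to the vertex `x`. -/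
noncomputable def upperDensityAt {V : Type*} (G : SimpleGraph V) (X : Set V) (x : V) : ℝ :=
  Filter.limsup
    (fun n => ((X ∩ gSphere G x n).ncard : ℝ) / ((gSphere G x n).ncard : ℝ))
    Filter.atTop

/-! For adjacent `u, v` in the tree, `S_{n+2}(u) ⊆ S_{n+1}(v) ∪ S_{n+3}(v)`, and since every sphere
`S_{n+1}` has `(q+1)q^n` elements, `|S_{n+1}(v)| = |S_{n+2}(u)| / q` and
`|S_{n+3}(v)| = q |S_{n+2}(u)|`. So the proportion of `X` on `S_{n+2}(u)` is at most `q` times its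
proportion on `S_{n+3}(v)` plus `q⁻¹` times its proportion on `S_{n+1}(v)`, whence
`d*(X,u) ≤ (q + q⁻¹) d*(X,v)`. Iterating along a geodesic gives
`d*(X,x) ≤ (q + q⁻¹)^{d(x,y)} d*(X,y)`, which is stronger than the claimed bound. -/

open Topology

lemma limsup_le_mul_limsup_of_le_shifts {u v : ℕ → ℝ} {a b : ℝ} (ha : 0 ≤ a) (hb : 0 ≤ b)
    (hu : IsCoboundedUnder (· ≤ ·) atTop u) (hv : IsBoundedUnder (· ≤ ·) atTop v)
    (h : ∀ n, u (n + 2) ≤ a * v (n + 3) + b * v (n + 1)) :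
    limsup u atTop ≤ (a + b) * limsup v atTop := by
  have hlim : Tendsto (fun c => (a + b) * c) (𝓝[>] limsup v atTop)
      (𝓝 ((a + b) * limsup v atTop)) :=
    ((continuous_const_mul (a + b)).tendsto _).mono_left nhdsWithin_le_nhds
  refine ge_of_tendsto hlim (eventually_nhdsWithin_of_forall fun c hc => ?_)
  obtain ⟨N, hN⟩ := eventually_atTop.1 (eventually_lt_of_limsup_lt hc hv)
  refine limsup_le_of_le hu (eventually_atTop.2 ⟨N + 2, fun n hn => ?_⟩)
  obtain ⟨m, rfl⟩ : ∃ m, n = m + 2 := ⟨n - 2, by omega⟩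
  calc u (m + 2) ≤ a * v (m + 3) + b * v (m + 1) := h m
    _ ≤ a * c + b * c := by gcongr <;> exact (hN _ (by omega)).le
    _ = (a + b) * c := by ring

namespace SimpleGraph

variable {V : Type*} {G : SimpleGraph V} {x u v : V} {n q : ℕ}

lemma Walk.le_pow_length_mul {f : V → ℝ} {c : ℝ} (hc : 0 ≤ c)
    (h : ∀ u v, G.Adj u v → f u ≤ c * f v) (p : G.Walk u v) : f u ≤ c ^ p.length * f v := by
  induction p with
  | nil => simp
  | cons hadj p ih =>
    calc _ ≤ c * f _ := h _ _ hadj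
      _ ≤ c * (c ^ p.length * f _) := by gcongr
      _ = _ := by rw [Walk.length_cons, pow_succ]; ring

lemma Connected.le_pow_dist_mul {f : V → ℝ} {c : ℝ} (hG : G.Connected) (hc : 0 ≤ c)
    (h : ∀ u v, G.Adj u v → f u ≤ c * f v) (u v : V) : f u ≤ c ^ G.dist u v * f v := by
  obtain ⟨p, hp⟩ := hG.exists_walk_length_eq_dist u v
  exact hp ▸ p.le_pow_length_mul hc h

lemma Connected.exists_adj_dist_eq_of_dist_eq_add_one (hG : G.Connected)
    (hd : G.dist x v = n + 1) : ∃ u, G.Adj u v ∧ G.dist x u = n := by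
  obtain ⟨p, hp⟩ := hG.exists_walk_length_eq_dist v x
  cases p with
  | nil => simp_all
  | @cons _ u _ hadj p =>
    have hle : G.dist x u ≤ p.length := dist_comm (G := G) ▸ dist_le p
    have hge : G.dist x v ≤ G.dist x u + 1 := by
      simpa [dist_eq_one_iff_adj.mpr hadj.symm] using hG.dist_triangle (u := x) (v := u) (w := v)
    rw [Walk.length_cons, dist_comm, hd] at hp
    exact ⟨u, hadj.symm, by omega⟩

lemma IsTree.eq_of_adj_of_dist_eq (hG : G.IsTree) {u' : V} (hd : G.dist x v = n + 1)
    (hu : G.Adj u v) (hu' : G.Adj u' v) (hxu : G.dist x u = n) (hxu' : G.dist x u' = n) :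
    u = u' := by
  obtain ⟨p, -, hp⟩ := hG.connected.exists_path_of_dist x u
  obtain ⟨p', -, hp'⟩ := hG.connected.exists_path_of_dist x u'
  have hpath : (p.concat hu).IsPath :=
    Walk.isPath_of_length_eq_dist _ (by rw [Walk.length_concat]; omega)
  have hpath' : (p'.concat hu').IsPath :=
    Walk.isPath_of_length_eq_dist _ (by rw [Walk.length_concat]; omega)
  have := (hG.isAcyclic.subsingleton_path x v).elim ⟨_, hpath⟩ ⟨_, hpath'⟩
  exact (Walk.concat_inj (Subtype.ext_iff.mp this)).1

lemma IsTree.gSphere_subset_union_of_adj (hG : G.IsTree) (huv : G.Adj u v) (n : ℕ) :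
    gSphere G u (n + 1) ⊆ gSphere G v n ∪ gSphere G v (n + 2) := by
  intro w hw
  simp only [gSphere, Set.mem_union, Set.mem_ofPred_eq, dist_comm (u := u) (v := w),
    dist_comm (u := v) (v := w)] at hw ⊢
  have := hG.dist_eq_dist_add_one_of_adj w huv
  omega

lemma gSphere_zero (hG : G.Connected) (x : V) : gSphere G x 0 = {x} := by
  ext y
  simp [gSphere, hG.dist_eq_zero_iff, eq_comm]

lemma gSphere_one (x : V) : gSphere G x 1 = G.neighborSet x := by
  ext y
  simp [gSphere]

lemma Connected.gSphere_add_one_eq_biUnion (hG : G.Connected) (x : V) (n : ℕ) :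
    gSphere G x (n + 1) = ⋃ v ∈ gSphere G x n, G.neighborSet v ∩ gSphere G x (n + 1) := by
  ext w
  simp only [Set.mem_iUnion, Set.mem_inter_iff, mem_neighborSet, exists_prop]
  refine ⟨fun hw => ?_, fun ⟨_, _, _, hw⟩ => hw⟩
  obtain ⟨v, hvw, hv⟩ := hG.exists_adj_dist_eq_of_dist_eq_add_one hw
  exact ⟨v, hv, hvw, hw⟩

lemma IsTree.pairwiseDisjoint_neighborSet_inter_gSphere (hG : G.IsTree) (x : V) (n : ℕ) :
    (gSphere G x n).PairwiseDisjoint fun v => G.neighborSet v ∩ gSphere G x (n + 1) := by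
  intro v hv v' hv' hne
  refine Set.disjoint_left.2 fun w ⟨hvw, hw⟩ ⟨hv'w, _⟩ => hne ?_
  exact hG.eq_of_adj_of_dist_eq hw hvw hv'w hv hv'

lemma IsTree.neighborSet_inter_gSphere_eq_sdiff (hG : G.IsTree) (hd : G.dist x v = n + 1)
    (huv : G.Adj u v) (hu : G.dist x u = n) :
    G.neighborSet v ∩ gSphere G x (n + 2) = G.neighborSet v \ {u} := by
  ext w
  simp only [gSphere, Set.mem_inter_iff, mem_neighborSet, Set.mem_ofPred_eq, Set.mem_sdiff,
    Set.mem_singleton_iff]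
  refine and_congr_right fun hvw => ⟨by rintro hw rfl; omega, fun hwu => ?_⟩
  rcases hG.dist_eq_dist_add_one_of_adj x hvw with h | h
  · exact absurd (hG.eq_of_adj_of_dist_eq hd hvw.symm huv (by omega) hu) hwu
  · omega

lemma Connected.finite_gSphere (hG : G.Connected)
    (hreg : ∀ v : V, (G.neighborSet v).ncard = q + 1) (x : V) (n : ℕ) :
    (gSphere G x n).Finite := by
  induction n with
  | zero => simp [gSphere_zero hG]
  | succ n ih =>
    rw [hG.gSphere_add_one_eq_biUnion]
    exact ih.biUnion fun v _ =>
      (Set.finite_of_ncard_pos (by rw [hreg]; omega)).inter_of_left _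

lemma IsTree.ncard_gSphere_add_two (hG : G.IsTree)
    (hreg : ∀ v : V, (G.neighborSet v).ncard = q + 1) (x : V) (n : ℕ) :
    (gSphere G x (n + 2)).ncard = q * (gSphere G x (n + 1)).ncard := by
  have hchildren : ∀ v ∈ gSphere G x (n + 1),
      (G.neighborSet v ∩ gSphere G x (n + 2)).ncard = q := by
    intro v hv
    obtain ⟨u, huv, hu⟩ := hG.connected.exists_adj_dist_eq_of_dist_eq_add_one hv
    rw [hG.neighborSet_inter_gSphere_eq_sdiff hv huv hu,
      Set.ncard_sdiff_singleton_of_mem (show u ∈ G.neighborSet v from huv.symm), hreg,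
      Nat.add_sub_cancel]
  rw [hG.connected.gSphere_add_one_eq_biUnion,
    (hG.connected.finite_gSphere hreg x _).ncard_biUnion
      (fun v _ => (hG.connected.finite_gSphere hreg x _).inter_of_right _)
      (hG.pairwiseDisjoint_neighborSet_inter_gSphere x _),
    finsum_mem_congr rfl hchildren, ← finsum_one, mul_finsum_mem, mul_one]

lemma IsTree.ncard_gSphere_add_one (hG : G.IsTree)
    (hreg : ∀ v : V, (G.neighborSet v).ncard = q + 1) (x : V) (n : ℕ) :
    (gSphere G x (n + 1)).ncard = (q + 1) * q ^ n := by
  induction n with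
  | zero => simp [gSphere_one, hreg]
  | succ n ih => rw [hG.ncard_gSphere_add_two hreg, ih]; ring

end SimpleGraph

section Density

variable {V : Type*} (G : SimpleGraph V) (X : Set V) (x : V)

noncomputable def sphereDensity (n : ℕ) : ℝ :=
  ((X ∩ gSphere G x n).ncard : ℝ) / ((gSphere G x n).ncard : ℝ)

lemma sphereDensity_nonneg (n : ℕ) : 0 ≤ sphereDensity G X x n := by
  unfold sphereDensity
  positivity

lemma sphereDensity_le_one (n : ℕ) : sphereDensity G X x n ≤ 1 := by
  unfold sphereDensity
  rcases (gSphere G x n).finite_or_infinite with hfin | hinf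
  · exact div_le_one_of_le₀ (mod_cast Set.ncard_le_ncard Set.inter_subset_right hfin)
      (Nat.cast_nonneg _)
  · simp [hinf.ncard]

lemma isBoundedUnder_sphereDensity : IsBoundedUnder (· ≤ ·) atTop (sphereDensity G X x) :=
  isBoundedUnder_of ⟨1, sphereDensity_le_one G X x⟩

lemma isCoboundedUnder_sphereDensity : IsCoboundedUnder (· ≤ ·) atTop (sphereDensity G X x) :=
  (isBoundedUnder_of ⟨0, sphereDensity_nonneg G X x⟩).isCoboundedUnder_le

lemma upperDensityAt_nonneg : 0 ≤ upperDensityAt G X x :=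
  le_limsup_of_frequently_le (.of_forall (sphereDensity_nonneg G X x))
    (isBoundedUnder_sphereDensity G X x)

end Density

namespace SimpleGraph.IsTree

variable {V : Type*} {G : SimpleGraph V} {q : ℕ} {u v : V}

lemma sphereDensity_le_of_adj (hG : G.IsTree) (hq : 0 < q)
    (hreg : ∀ v : V, (G.neighborSet v).ncard = q + 1) (X : Set V) (huv : G.Adj u v) (n : ℕ) :
    sphereDensity G X u (n + 2) ≤
      q * sphereDensity G X v (n + 3) + (q : ℝ)⁻¹ * sphereDensity G X v (n + 1) := by
  have hcount : (X ∩ gSphere G u (n + 2)).ncard ≤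
      (X ∩ gSphere G v (n + 3)).ncard + (X ∩ gSphere G v (n + 1)).ncard := by
    refine (Set.ncard_le_ncard ?_ ?_).trans (Set.ncard_union_le _ _)
    · rw [← Set.inter_union_distrib_left, Set.union_comm]
      exact Set.inter_subset_inter_right X (hG.gSphere_subset_union_of_adj huv (n + 1))
    · exact ((hG.connected.finite_gSphere hreg v _).inter_of_right X).union
        ((hG.connected.finite_gSphere hreg v _).inter_of_right X)
  have hq' : (0 : ℝ) < q := mod_cast hq
  unfold sphereDensity
  rw [hG.ncard_gSphere_add_one hreg, hG.ncard_gSphere_add_one hreg,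
    hG.ncard_gSphere_add_one hreg]
  calc _ ≤ ((X ∩ gSphere G v (n + 3)).ncard + (X ∩ gSphere G v (n + 1)).ncard : ℝ) /
        ↑((q + 1) * q ^ (n + 1)) := by gcongr; exact_mod_cast hcount
    _ = _ := by push_cast; field_simp; ring

lemma upperDensityAt_le_of_adj (hG : G.IsTree) (hq : 0 < q)
    (hreg : ∀ v : V, (G.neighborSet v).ncard = q + 1) (X : Set V) (huv : G.Adj u v) :
    upperDensityAt G X u ≤ (q + (q : ℝ)⁻¹) * upperDensityAt G X v :=
  limsup_le_mul_limsup_of_le_shifts (by positivity) (by positivity)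
    (isCoboundedUnder_sphereDensity G X u) (isBoundedUnder_sphereDensity G X v)
    (hG.sphereDensity_le_of_adj hq hreg X huv)

end SimpleGraph.IsTree

/-- Positive upper density at some vertex implies positive upper density at every
vertex; in fact `d*(X,y) ≥ (2(q+q⁻¹))^{-d(x,y)} d*(X,x)`. -/
theorem stmt1 {V : Type*} (q : ℕ) (hq : 2 ≤ q) (G : SimpleGraph V)
    (htree : G.IsTree) (hreg : ∀ v : V, (G.neighborSet v).ncard = q + 1)
    (X : Set V) (x : V) (hx : 0 < upperDensityAt G X x) :
    ∀ y : V, 0 < upperDensityAt G X y ∧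
      ((2 * ((q : ℝ) + (q : ℝ)⁻¹)) ^ (G.dist x y))⁻¹ * upperDensityAt G X x ≤
        upperDensityAt G X y := by
  intro y
  set c : ℝ := q + (q : ℝ)⁻¹
  have hc : 0 ≤ c := by positivity
  have hxy : upperDensityAt G X x ≤ c ^ G.dist x y * upperDensityAt G X y :=
    htree.connected.le_pow_dist_mul hc
      (fun _ _ => htree.upperDensityAt_le_of_adj (by omega) hreg X) x y
  have hbound : upperDensityAt G X x ≤ (2 * c) ^ G.dist x y * upperDensityAt G X y :=
    hxy.trans (by gcongr; exacts [upperDensityAt_nonneg G X y, by linarith])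
  exact ⟨pos_of_mul_pos_right (hx.trans_le hbound) (by positivity),
    (inv_mul_le_iff₀ (by positivity)).2 hbound⟩
end

section
/- Let $T_q$ be the homogeneous tree of degree $q+1\geq 3$ with root $o$. Fix $n > t \geq t_1 \geq 1$ and $X \subseteq V$. Suppose there exist no vertices $x,y \in X$ with $d(o,x)=d(o,y)$ and $d(x,y)=2t_1$. Then for each vertex $v$ with $d(o,v)=n-t$, among the sets $C(u,t_1-1)$ with $u$ a descendant of $v$ at distance $n-t_1+1$ from $o$ (the atoms of level $t_1-1$ inside the descendants of $v$ on the sphere $S_n$), the proportion that intersect $X$ nontrivially is at most $q^{-1}$. -/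
open Filter

/-- The set `C(v,k)` of `k`-descendants of `v` (relative to the root `o`). -/
def descSet {V : Type*} (G : SimpleGraph V) (o v : V) (k : ℕ) : Set V :=
  {x | G.dist v x = k ∧ G.dist o x = G.dist o v + k}

/-! Atoms `C(u₁, t₁-1)` and `C(u₂, t₁-1)` below distinct children `u₁ ≠ u₂` of one vertex `w`
lie at equal depth, and any two of their points are at distance exactly `2 t₁`, since every
descendant of `u₁` is one step farther from a point below `u₂` than its own parent is. So among
the `q` children of each vertex of `C(v, t - t₁)` at most one has an atom meeting `X`, while
`C(v, t - t₁ + 1)` has exactly `q` times as many vertices as `C(v, t - t₁)`. -/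

open SimpleGraph

section DescendantSets

variable {V : Type*} {G : SimpleGraph V}

theorem SimpleGraph.Connected.exists_adj_dist_add_one_eq (hG : G.Connected) {z x : V}
    (hx : 0 < G.dist z x) : ∃ y, G.Adj y x ∧ G.dist z y + 1 = G.dist z x := by
  obtain ⟨p, hp⟩ := hG.exists_walk_length_eq_dist z x
  have hnil : ¬p.Nil := fun h => by rw [← hp, h.length_eq_zero] at hx; exact hx.false
  have hadj := p.adj_penultimate hnil
  refine ⟨p.penultimate, hadj, le_antisymm ?_ ?_⟩
  · have := dist_le p.dropLast
    have := p.length_dropLast_add_one hnil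
    omega
  · have := hG.dist_triangle (u := z) (v := p.penultimate) (w := x)
    rwa [dist_eq_one_iff_adj.mpr hadj] at this

theorem SimpleGraph.IsTree.eq_of_adj_of_dist_add_one_eq (hG : G.IsTree) {z x y₁ y₂ : V}
    (h₁ : G.Adj y₁ x) (h₂ : G.Adj y₂ x) (hd₁ : G.dist z y₁ + 1 = G.dist z x)
    (hd₂ : G.dist z y₂ + 1 = G.dist z x) : y₁ = y₂ := by
  obtain ⟨a₁, ha₁⟩ := hG.connected.exists_walk_length_eq_dist z y₁
  obtain ⟨a₂, ha₂⟩ := hG.connected.exists_walk_length_eq_dist z y₂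
  have hp₁ : (a₁.concat h₁).IsPath := Walk.isPath_of_length_eq_dist _ (by simp [ha₁, hd₁])
  have hp₂ : (a₂.concat h₂).IsPath := Walk.isPath_of_length_eq_dist _ (by simp [ha₂, hd₂])
  exact (Walk.concat_inj ((hG.existsUnique_path z x).unique hp₁ hp₂)).1

theorem descSet_zero (hG : G.Connected) (o v : V) : descSet G o v 0 = {v} := by
  ext x
  simp only [descSet, hG.dist_eq_zero_iff, add_zero, Set.mem_singleton_iff]
  exact ⟨fun h => h.1.symm, fun h => ⟨h.symm, by rw [h]⟩⟩

theorem mem_descSet_add (hG : G.Connected) {o v y x : V} {j k : ℕ}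
    (hy : y ∈ descSet G o v j) (hx : x ∈ descSet G o y k) : x ∈ descSet G o v (j + k) := by
  obtain ⟨hy₁, hy₂⟩ := hy
  obtain ⟨hx₁, hx₂⟩ := hx
  have := hG.dist_triangle (u := v) (v := y) (w := x)
  have := hG.dist_triangle (u := o) (v := v) (w := x)
  exact ⟨by omega, by omega⟩

theorem exists_mem_descSet_adj (hG : G.Connected) {o v x : V} {k : ℕ}
    (hx : x ∈ descSet G o v (k + 1)) : ∃ y ∈ descSet G o v k, G.Adj y x := by
  obtain ⟨hx₁, hx₂⟩ := hx
  obtain ⟨y, hadj, hy⟩ := hG.exists_adj_dist_add_one_eq (z := v) (x := x) (by omega)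
  have := hG.dist_triangle (u := o) (v := v) (w := y)
  have := hG.dist_triangle (u := o) (v := y) (w := x)
  rw [dist_eq_one_iff_adj.mpr hadj] at this
  exact ⟨y, ⟨by omega, by omega⟩, hadj⟩

theorem descSet_succ (hG : G.Connected) (o v : V) (k : ℕ) :
    descSet G o v (k + 1) = ⋃ w ∈ descSet G o v k, descSet G o w 1 := by
  ext x
  simp only [Set.mem_iUnion, exists_prop]
  constructor
  · intro hx
    obtain ⟨y, hy, hadj⟩ := exists_mem_descSet_adj hG hx
    exact ⟨y, hy, dist_eq_one_iff_adj.mpr hadj, by rw [hx.2, hy.2]; rfl⟩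
  · rintro ⟨w, hw, hx⟩
    exact mem_descSet_add hG hw hx

theorem SimpleGraph.IsTree.eq_of_mem_descSet_one (hG : G.IsTree) {o w₁ w₂ u : V}
    (h₁ : u ∈ descSet G o w₁ 1) (h₂ : u ∈ descSet G o w₂ 1) : w₁ = w₂ :=
  hG.eq_of_adj_of_dist_add_one_eq (dist_eq_one_iff_adj.mp h₁.1) (dist_eq_one_iff_adj.mp h₂.1)
    h₁.2.symm h₂.2.symm

theorem SimpleGraph.IsTree.ncard_descSet_one (hG : G.IsTree) {q : ℕ} {o w : V}
    (hw : 0 < G.dist o w) (hdeg : (G.neighborSet w).ncard = q + 1) :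
    (descSet G o w 1).ncard = q := by
  obtain ⟨y, hyw, hy⟩ := hG.connected.exists_adj_dist_add_one_eq hw
  have hchildren : descSet G o w 1 = G.neighborSet w \ {y} := by
    ext u
    simp only [descSet, dist_eq_one_iff_adj, Set.mem_ofPred_eq, Set.mem_sdiff, mem_neighborSet,
      Set.mem_singleton_iff]
    refine ⟨fun ⟨hwu, hu⟩ => ⟨hwu, by rintro rfl; omega⟩, fun ⟨hwu, hne⟩ => ⟨hwu, ?_⟩⟩
    rcases hG.dist_eq_dist_add_one_of_adj o hwu with h | h
    · exact absurd (hG.eq_of_adj_of_dist_add_one_eq hwu.symm hyw h.symm hy) hne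
    · exact h
  rw [hchildren, Set.ncard_sdiff_singleton_of_mem (show y ∈ G.neighborSet w from hyw.symm), hdeg,
    Nat.add_sub_cancel]

theorem descSet_finite (hG : G.Connected) (hfin : ∀ w, (G.neighborSet w).Finite) (o v : V)
    (k : ℕ) : (descSet G o v k).Finite := by
  induction k with
  | zero => simp [descSet_zero hG]
  | succ k ih =>
    rw [descSet_succ hG]
    exact ih.biUnion fun w _ => (hfin w).subset fun u hu => dist_eq_one_iff_adj.mp hu.1

theorem SimpleGraph.IsTree.ncard_descSet_succ (hG : G.IsTree) {q : ℕ}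
    (hdeg : ∀ w, (G.neighborSet w).ncard = q + 1) {o v : V} (hv : 0 < G.dist o v) (k : ℕ) :
    (descSet G o v (k + 1)).ncard = q * (descSet G o v k).ncard := by
  have hfin : ∀ w, (G.neighborSet w).Finite :=
    fun w => Set.finite_of_ncard_ne_zero (by rw [hdeg]; omega)
  have hD := descSet_finite hG.connected hfin o v k
  have hdisj : (descSet G o v k).PairwiseDisjoint (descSet G o · 1) := fun w₁ _ w₂ _ hne =>
    Set.disjoint_left.mpr fun u h₁ h₂ => hne (hG.eq_of_mem_descSet_one h₁ h₂)
  rw [descSet_succ hG.connected,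
    hD.ncard_biUnion (fun w _ => descSet_finite hG.connected hfin o w 1) hdisj,
    finsum_mem_congr rfl fun w hw => hG.ncard_descSet_one (by rw [hw.2]; omega) (hdeg w),
    finsum_mem_eq_finite_toFinset_sum _ hD, Finset.sum_const, Set.ncard_eq_toFinset_card _ hD,
    smul_eq_mul, mul_comm]

/-- Below `u`, the `o`-parent of each vertex is its neighbour towards `z`: otherwise that vertex
would have two neighbours closer to `z`. -/
theorem SimpleGraph.IsTree.dist_eq_add_of_mem_descSet (hG : G.IsTree) {o z w u : V}
    (hu : u ∈ descSet G o w 1) (hzu : G.dist z u = G.dist z w + 1) {s : ℕ} {x : V}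
    (hx : x ∈ descSet G o u s) : G.dist z x = G.dist z u + s := by
  suffices key : ∀ s, ∀ x ∈ descSet G o u s,
      G.dist z x = G.dist z u + s ∧ ∃ p, x ∈ descSet G o p 1 ∧ G.dist z x = G.dist z p + 1 from
    (key s x hx).1
  intro s
  induction s with
  | zero =>
    intro x hx
    rw [descSet_zero hG.connected, Set.mem_singleton_iff] at hx
    exact ⟨by rw [hx, add_zero], w, hx ▸ hu, hx ▸ hzu⟩
  | succ s ih =>
    intro x hx
    obtain ⟨y, hy, hyx⟩ := exists_mem_descSet_adj hG.connected hx
    obtain ⟨hzy', p, hpy, hzy⟩ := ih y hy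
    have hxy : x ∈ descSet G o y 1 := ⟨dist_eq_one_iff_adj.mpr hyx, by rw [hx.2, hy.2]; rfl⟩
    rcases hG.dist_eq_dist_add_one_of_adj z hyx with h | h
    · have hxp : x = p := hG.eq_of_adj_of_dist_add_one_eq hyx.symm
        (dist_eq_one_iff_adj.mp hpy.1) h.symm hzy.symm
      subst hxp
      have := hxy.2
      have := hpy.2
      omega
    · exact ⟨by omega, y, hxy, h⟩

theorem SimpleGraph.IsTree.dist_eq_of_mem_descSet_of_ne (hG : G.IsTree) {o w u₁ u₂ z₁ z₂ : V}
    {s : ℕ} (hu₁ : u₁ ∈ descSet G o w 1) (hu₂ : u₂ ∈ descSet G o w 1) (hne : u₁ ≠ u₂)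
    (hz₁ : z₁ ∈ descSet G o u₁ s) (hz₂ : z₂ ∈ descSet G o u₂ s) :
    G.dist z₁ z₂ = 2 * (s + 1) := by
  have hwz₂ : G.dist w z₂ = 1 + s := (mem_descSet_add hG.connected hu₂ hz₂).1
  have hwu₁ := dist_eq_one_iff_adj.mp hu₁.1
  have hwu₂ := dist_eq_one_iff_adj.mp hu₂.1
  have haway : G.dist z₂ u₁ = G.dist z₂ w + 1 := by
    rcases hG.dist_eq_dist_add_one_of_adj z₂ hwu₁ with h | h
    · refine absurd (hG.eq_of_adj_of_dist_add_one_eq hwu₁.symm hwu₂.symm h.symm ?_) hne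
      rw [dist_comm, hz₂.1, dist_comm, hwz₂, add_comm]
    · exact h
  rw [dist_comm, hG.dist_eq_add_of_mem_descSet hu₁ haway hz₁, haway, dist_comm, hwz₂]
  ring

end DescendantSets

theorem stmt3_general {V : Type*} (q : ℕ) (hq : 2 ≤ q) (G : SimpleGraph V)
    (htree : G.IsTree) (hreg : ∀ v : V, (G.neighborSet v).ncard = q + 1)
    (o : V) (X : Set V) (n t t₁ : ℕ) (h1 : 1 ≤ t₁) (h3 : t < n)
    (hno : ¬ ∃ x ∈ X, ∃ y ∈ X, G.dist o x = G.dist o y ∧ G.dist x y = 2 * t₁)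
    (v : V) (hv : G.dist o v = n - t) :
    ({u ∈ descSet G o v (t - t₁ + 1) | (X ∩ descSet G o u (t₁ - 1)).Nonempty}.ncard : ℝ) ≤
      (q : ℝ)⁻¹ * ((descSet G o v (t - t₁ + 1)).ncard : ℝ) := by
  set k := t - t₁
  set hit := {u ∈ descSet G o v (k + 1) | (X ∩ descSet G o u (t₁ - 1)).Nonempty}
  have hparent : ∀ u ∈ hit, ∃ w ∈ descSet G o v k, u ∈ descSet G o w 1 := fun u hu => by
    have hu := hu.1
    rw [descSet_succ htree.connected, Set.mem_iUnion₂] at hu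
    simpa only [exists_prop] using hu
  choose! parent hparent using hparent
  have hinj : Set.InjOn parent hit := by
    intro u₁ hu₁ u₂ hu₂ heq
    by_contra hne
    obtain ⟨z₁, hz₁X, hz₁⟩ := hu₁.2
    obtain ⟨z₂, hz₂X, hz₂⟩ := hu₂.2
    have hdist := htree.dist_eq_of_mem_descSet_of_ne (hparent u₁ hu₁).2
      (heq ▸ (hparent u₂ hu₂).2) hne hz₁ hz₂
    refine hno ⟨z₁, hz₁X, z₂, hz₂X, ?_, by omega⟩
    rw [hz₁.2, hz₂.2, (hparent u₁ hu₁).2.2, heq, (hparent u₂ hu₂).2.2]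
  have hfin : ∀ w, (G.neighborSet w).Finite :=
    fun w => Set.finite_of_ncard_ne_zero (by rw [hreg]; omega)
  have hcard : hit.ncard ≤ (descSet G o v k).ncard :=
    Set.ncard_le_ncard_of_injOn parent (fun u hu => (hparent u hu).1) hinj
      (descSet_finite htree.connected hfin o v k)
  rw [htree.ncard_descSet_succ hreg (by omega) k, Nat.cast_mul,
    inv_mul_cancel_left₀ (Nat.cast_ne_zero.mpr (by omega))]
  exact_mod_cast hcard

/-- Claim 1 of Proposition 1: if no two points of `X` equidistant from the root are at
distance `2t₁`, then for each vertex `v` at depth `n - t`, the proportion of the atoms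
`C(u, t₁-1)` (with `u` a descendant of `v` at depth `n - t₁ + 1`) meeting `X`
is at most `q⁻¹`. -/
theorem stmt3 {V : Type*} (q : ℕ) (hq : 2 ≤ q) (G : SimpleGraph V)
    (htree : G.IsTree) (hreg : ∀ v : V, (G.neighborSet v).ncard = q + 1)
    (o : V) (X : Set V) (n t t₁ : ℕ) (h1 : 1 ≤ t₁) (h2 : t₁ ≤ t) (h3 : t < n)
    (hno : ¬ ∃ x ∈ X, ∃ y ∈ X, G.dist o x = G.dist o y ∧ G.dist x y = 2 * t₁)
    (v : V) (hv : G.dist o v = n - t) :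
    ({u ∈ descSet G o v (t - t₁ + 1) | (X ∩ descSet G o u (t₁ - 1)).Nonempty}.ncard : ℝ) ≤
      (q : ℝ)⁻¹ * ((descSet G o v (t - t₁ + 1)).ncard : ℝ) :=
  stmt3_general q hq G htree hreg o X n t t₁ h1 h3 hno v hv
end

section
/- Let $0 < \epsilon < 1/4$ and $A = \{n \in \mathbb{Z} : \{n\sqrt{2}\} < \epsilon\}$. Then the set $(A-A)+(A-A) = \{a - b + c - d : a,b,c,d \in A\}$ has density $4\epsilon < 1$; in particular it is a proper subset of $\mathbb{Z}$. -/
/-!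
Write `bohrSet α r` for the integers `n` with `n α` within `r` of an integer. The differences of
`A` form `bohrSet √2 ε`, and since `ℤ √2 + ℤ` is dense, `bohrSet α r + bohrSet α s` is all of
`bohrSet α (r + s)`; hence `(A - A) + (A - A) = bohrSet √2 (2ε)`.

For its density take coprime `p, q` with `q` large and `|q α - p| ≤ 1 / q`. If `n` runs through
`q` consecutive integers and `u ≤ n α - k n ≤ v`, then `n ↦ q k n - p n` is injective and takes
values in an interval of length `q (v - u) + 2`. Applied to `bohrSet α r` and to its complement
this pins the count on each such block to `2 r q ± 3`, and cutting long windows into blocks gives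
density `2 r`, here `4 ε`.
-/

open Filter Finset Topology
open scoped Pointwise

def bohrSet (α r : ℝ) : Set ℤ := {n | ∃ k : ℤ, |n * α - k| < r}

section Sumset

theorem Int.fract_le_sub_of_le {R : Type*} [Ring R] [LinearOrder R] [IsOrderedRing R]
    [FloorRing R] {x : R} {k : ℤ} (h : (k : R) ≤ x) : Int.fract x ≤ x - k := by
  have : k ≤ ⌊x⌋ := Int.le_floor.2 h
  rw [← Int.self_sub_floor]
  gcongr

theorem setOf_fract_lt_sub_self (α ε : ℝ) :
    {n : ℤ | Int.fract (n * α) < ε} - {n : ℤ | Int.fract (n * α) < ε} = bohrSet α ε := by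
  ext n
  simp only [Set.mem_sub, Set.mem_ofPred_eq, bohrSet]
  constructor
  · rintro ⟨a, ha, b, hb, rfl⟩
    refine ⟨⌊a * α⌋ - ⌊b * α⌋, abs_lt.2 ⟨?_, ?_⟩⟩ <;>
    · push_cast
      linarith [Int.self_sub_floor (a * α), Int.self_sub_floor (b * α),
        Int.fract_nonneg (a * α), Int.fract_nonneg (b * α)]
  · rintro ⟨k, hk⟩
    have hzero : Int.fract (((0 : ℤ) : ℝ) * α) < ε := by
      simpa using (abs_nonneg _).trans_lt hk
    rw [abs_lt] at hk
    rcases le_total (k : ℝ) (n * α) with h | h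
    · exact ⟨n, (Int.fract_le_sub_of_le h).trans_lt (by linarith), 0, hzero, sub_zero n⟩
    · have h' : ((-k : ℤ) : ℝ) ≤ ((-n : ℤ) : ℝ) * α := by push_cast; linarith
      refine ⟨0, hzero, -n, (Int.fract_le_sub_of_le h').trans_lt ?_, by ring⟩
      push_cast
      linarith

variable {α : ℝ}

theorem Irrational.exists_intCast_mul_sub_intCast_mem_Ioo (hα : Irrational α) {x y : ℝ}
    (h : x < y) : ∃ m k : ℤ, (m * α - k : ℝ) ∈ Set.Ioo x y := by
  have hdense : Dense (AddSubgroup.closure {α, 1} : Set ℝ) :=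
    dense_addSubgroupClosure_pair_iff.2 (by simpa using hα)
  obtain ⟨z, hz, hxz⟩ := hdense.exists_between h
  obtain ⟨m, j, rfl⟩ := AddSubgroup.mem_closure_pair.1 hz
  exact ⟨m, -j, by simpa using hxz⟩

theorem bohrSet_add_bohrSet (hα : Irrational α) {r s : ℝ} (hr : 0 < r) (hs : 0 < s) :
    bohrSet α r + bohrSet α s = bohrSet α (r + s) := by
  ext n
  simp only [Set.mem_add, bohrSet, Set.mem_ofPred_eq]
  constructor
  · rintro ⟨a, ⟨j, hj⟩, b, ⟨k, hk⟩, rfl⟩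
    refine ⟨j + k, ?_⟩
    calc |((a + b : ℤ) : ℝ) * α - ((j + k : ℤ) : ℝ)| = |(a * α - j) + (b * α - k)| := by
          push_cast; ring_nf
      _ < r + s := (abs_add_le _ _).trans_lt (add_lt_add hj hk)
  · rintro ⟨k, hk⟩
    rw [abs_lt] at hk
    obtain ⟨m, j, hm⟩ := hα.exists_intCast_mul_sub_intCast_mem_Ioo
      (x := max (-r) (n * α - k - s)) (y := min r (n * α - k + s))
      (max_lt (lt_min (by linarith) (by linarith)) (lt_min (by linarith) (by linarith)))
    simp only [Set.mem_Ioo, max_lt_iff, lt_min_iff] at hm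
    refine ⟨m, ⟨j, abs_lt.2 ⟨by linarith, by linarith⟩⟩, n - m, ⟨k - j, abs_lt.2 ⟨?_, ?_⟩⟩,
      by ring⟩ <;>
    · push_cast; linarith

end Sumset

theorem Irrational.exists_isCoprime_abs_mul_sub_le {α : ℝ} (hα : Irrational α) (Q : ℕ) :
    ∃ q : ℕ, ∃ p : ℤ, Q < q ∧ IsCoprime p q ∧ |q * α - p| ≤ 1 / q := by
  -- for large `n` no denominator `d ≤ Q` satisfies `|d α - j| ≤ 1 / (n + 1)`, so Dirichlet's
  -- approximation with parameter `n` has a denominator `> Q`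
  have hfar : ∀ᶠ n : ℕ in atTop, ∀ d ∈ Icc 1 Q, 1 / ((n : ℝ) + 1) < |d * α - round (d * α)| := by
    rw [eventually_all_finset]
    intro d hd
    have hd0 : d ≠ 0 := by have := (mem_Icc.1 hd).1; omega
    have hpos : 0 < |d * α - round (d * α)| :=
      abs_pos.2 (sub_ne_zero.2 ((hα.natCast_mul hd0).ne_int _))
    exact tendsto_one_div_add_atTop_nhds_zero_nat.eventually (gt_mem_nhds hpos)
  obtain ⟨n, hfar, hn⟩ := (hfar.and (eventually_gt_atTop 0)).exists
  obtain ⟨r, hr, hden⟩ := Real.exists_rat_abs_sub_le_and_den_le α hn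
  have hdenR : (0 : ℝ) < r.den := by exact_mod_cast r.pos
  have happrox : |r.den * α - r.num| ≤ 1 / (n + 1) := by
    have : (r.den : ℝ) * α - r.num = r.den * (α - r) := by
      rw [Rat.cast_def]; field_simp
    rw [this, abs_mul, abs_of_pos hdenR]
    calc _ ≤ (r.den : ℝ) * (1 / ((n + 1) * r.den)) := by gcongr
      _ = 1 / (n + 1) := by field_simp
  refine ⟨r.den, r.num, ?_, Int.isCoprime_iff_gcd_eq_one.2 r.reduced, happrox.trans ?_⟩
  · by_contra! h
    exact (hfar r.den (mem_Icc.2 ⟨r.pos, h⟩)).not_ge ((round_le _ r.num).trans happrox)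
  · gcongr
    exact (Nat.cast_le.2 hden).trans (le_add_of_nonneg_right zero_le_one)

section Blocks

theorem card_le_of_injOn_of_mapsTo_Ioc {K ι : Type*} [Field K] [LinearOrder K]
    [IsStrictOrderedRing K] [FloorRing K] {s : Finset ι} {f : ι → ℤ} {x y : K} (hxy : x ≤ y)
    (hf : ∀ i ∈ s, x < f i ∧ (f i : K) ≤ y) (hinj : Set.InjOn f s) :
    (#s : K) ≤ y - x + 1 := by
  have hmaps : Set.MapsTo f s (Ioc ⌊x⌋ ⌊y⌋) := fun i hi =>
    mem_Ioc.2 ⟨Int.floor_lt.2 (hf i hi).1, Int.le_floor.2 (hf i hi).2⟩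
  have hcard : (#s : ℤ) ≤ max (⌊y⌋ - ⌊x⌋) 0 := by
    rw [← Int.toNat_eq_max, ← Int.card_Ioc]
    exact_mod_cast card_le_card_of_injOn f hmaps hinj
  have hcardK : (#s : K) ≤ ((max (⌊y⌋ - ⌊x⌋) 0 : ℤ) : K) := by exact_mod_cast hcard
  have hfloor : ((⌊y⌋ - ⌊x⌋ : ℤ) : K) ≤ y - x + 1 := by
    push_cast
    linarith [Int.floor_le y, Int.sub_one_lt_floor x]
  rcases max_cases (⌊y⌋ - ⌊x⌋) 0 with ⟨hmax, -⟩ | ⟨hmax, -⟩ <;> rw [hmax] at hcardK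
  · exact hcardK.trans hfloor
  · push_cast at hcardK
    linarith

variable {α : ℝ} {p : ℤ} {q : ℕ}

theorem card_filter_Ioc_le_of_isCoprime (hq : 0 < q) (hpq : IsCoprime p q)
    (hθ : |q * α - p| ≤ 1 / q) {u v : ℝ} (huv : u ≤ v) (a : ℤ) {P : ℤ → Prop} [DecidablePred P]
    (hP : ∀ n, P n → ∃ k : ℤ, n * α - k ∈ Set.Icc u v) :
    (#{n ∈ Ioc a (a + q) | P n} : ℝ) ≤ q * (v - u) + 3 := by
  choose! k hk using fun n (hn : n ∈ {n ∈ Ioc a (a + q) | P n}) => hP n (mem_filter.1 hn).2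
  set θ := q * α - p with hθ_def
  have hqR : (1 : ℝ) ≤ q := by exact_mod_cast hq
  -- `q k n - p n = n θ - q (n α - k n)` and `n θ` varies by less than `1` over the block
  have hmaps : ∀ n ∈ {n ∈ Ioc a (a + q) | P n},
      (a + 1) * θ - 1 - q * v < ((q * k n - p * n : ℤ) : ℝ) ∧
      ((q * k n - p * n : ℤ) : ℝ) ≤ (a + 1) * θ + 1 - q * u := by
    intro n hn
    obtain ⟨han, hna⟩ := mem_Ioc.1 (mem_filter.1 hn).1
    obtain ⟨hu, hv⟩ := hk n hn
    have han' : (a : ℝ) + 1 ≤ n := by exact_mod_cast Int.add_one_le_of_lt han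
    have hna' : (n : ℝ) ≤ a + q := by exact_mod_cast hna
    have hspan : |(n - (a + 1)) * θ| < 1 :=
      calc |(n - (a + 1)) * θ| = (n - (a + 1)) * |θ| := by
            rw [abs_mul, abs_of_nonneg (by linarith)]
        _ ≤ (q - 1) * (1 / q) := mul_le_mul (by linarith) hθ (abs_nonneg _) (by linarith)
        _ < 1 := by rw [sub_mul, one_mul, mul_one_div_cancel (by linarith)]; simpa using hq
    have hf : ((q * k n - p * n : ℤ) : ℝ) = n * θ - q * (n * α - k n) := by
      rw [hθ_def]; push_cast; ring
    rw [abs_lt] at hspan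
    rw [hf]
    constructor <;> nlinarith
  refine (card_le_of_injOn_of_mapsTo_Ioc (by nlinarith) hmaps ?_).trans_eq (by ring)
  intro n hn n' hn' hnn'
  simp only [coe_filter, mem_Ioc, Set.mem_ofPred_eq] at hn hn'
  have hdvd : (q : ℤ) ∣ p * (n - n') := ⟨k n - k n', by linear_combination -hnn'⟩
  have hlt : |n - n'| < q := abs_lt.2 ⟨by omega, by omega⟩
  linarith [Int.eq_zero_of_abs_lt_dvd (hpq.symm.dvd_of_dvd_mul_left hdvd) hlt]

open Classical in
theorem abs_card_filter_bohrSet_sub_le (hq : 0 < q) (hpq : IsCoprime p q)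
    (hθ : |q * α - p| ≤ 1 / q) {r : ℝ} (hr₀ : 0 ≤ r) (hr : r ≤ 1 / 2) (a : ℤ) :
    |(#{n ∈ Ioc a (a + q) | n ∈ bohrSet α r} : ℝ) - q * (2 * r)| ≤ 3 := by
  have hin := card_filter_Ioc_le_of_isCoprime hq hpq hθ (u := -r) (v := r) (by linarith) a
    (P := (· ∈ bohrSet α r)) fun n ⟨k, hk⟩ => ⟨k, (abs_lt.1 hk).1.le, (abs_lt.1 hk).2.le⟩
  have hout := card_filter_Ioc_le_of_isCoprime hq hpq hθ (u := r) (v := 1 - r) (by linarith) a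
    (P := (· ∉ bohrSet α r)) fun n hn => by
      refine ⟨⌊n * α⌋, ?_, ?_⟩ <;> by_contra! h <;> apply hn
      · exact ⟨⌊n * α⌋, by rw [abs_lt]; constructor <;> linarith [Int.floor_le (n * α)]⟩
      · exact ⟨⌊n * α⌋ + 1, by push_cast; rw [abs_lt]; constructor <;>
          linarith [Int.lt_floor_add_one (n * α)]⟩
  have htotal := card_filter_add_card_filter_not (s := Ioc a (a + q)) (· ∈ bohrSet α r)
  rw [Int.card_Ioc, add_sub_cancel_left, Int.toNat_natCast] at htotal
  have htotalR : (#{n ∈ Ioc a (a + q) | n ∈ bohrSet α r} : ℝ)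
      + #{n ∈ Ioc a (a + q) | n ∉ bohrSet α r} = q := by exact_mod_cast htotal
  rw [abs_le]
  constructor <;> linarith

end Blocks

section Density

variable {P : ℤ → Prop} [DecidablePred P]

theorem card_filter_Ioc_add_card_filter_Ioc {a b c : ℤ} (hab : a ≤ b) (hbc : b ≤ c) :
    #{n ∈ Ioc a b | P n} + #{n ∈ Ioc b c | P n} = #{n ∈ Ioc a c | P n} := by
  rw [← card_union_of_disjoint (disjoint_filter_filter (Ioc_disjoint_Ioc.2 (by omega))),
    ← filter_union, Ioc_union_Ioc_eq_Ioc hab hbc]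

theorem card_filter_Ioc_mono {a b c : ℤ} (hbc : b ≤ c) :
    #{n ∈ Ioc a b | P n} ≤ #{n ∈ Ioc a c | P n} :=
  card_le_card (filter_subset_filter _ (Ioc_subset_Ioc_right hbc))

variable {q : ℕ} {ρ C : ℝ}

theorem abs_card_filter_Ioc_mul_sub_le
    (hblock : ∀ a : ℤ, |(#{n ∈ Ioc a (a + q) | P n} : ℝ) - q * ρ| ≤ C) (a : ℤ) (B : ℕ) :
    |(#{n ∈ Ioc a (a + B * q) | P n} : ℝ) - B * q * ρ| ≤ B * C := by
  induction B with
  | zero => simp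
  | succ B ih =>
    have hblock' := abs_le.1 (hblock (a + B * q))
    rw [show a + ((B + 1 : ℕ) : ℤ) * q = a + B * q + q by push_cast; ring,
      ← card_filter_Ioc_add_card_filter_Ioc (le_add_of_nonneg_right (by positivity))
        (le_add_of_nonneg_right (by positivity))]
    rw [abs_le] at ih ⊢
    push_cast
    constructor <;> linarith

theorem abs_card_filter_Ioc_sub_le (hq : 0 < q) (hρ : 0 ≤ ρ)
    (hblock : ∀ a : ℤ, |(#{n ∈ Ioc a (a + q) | P n} : ℝ) - q * ρ| ≤ C) (a : ℤ) (L : ℕ) :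
    |(#{n ∈ Ioc a (a + L) | P n} : ℝ) - L * ρ| ≤ L * C / q + q * ρ + C := by
  have hC : 0 ≤ C := (abs_nonneg _).trans (hblock 0)
  set B := L / q
  have hBq : (B : ℝ) * q ≤ L := by exact_mod_cast Nat.div_mul_le_self L q
  have hLB : (L : ℝ) < (B + 1) * q := by
    rw [add_mul, one_mul]; exact_mod_cast Nat.lt_div_mul_add hq
  have hBC : (B : ℝ) * C ≤ L * C / q := by
    rw [mul_div_right_comm]; exact mul_le_mul_of_nonneg_right Nat.cast_div_le hC
  have hlow : (#{n ∈ Ioc a (a + B * q) | P n} : ℝ) ≤ #{n ∈ Ioc a (a + L) | P n} :=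
    Nat.cast_le.2 (card_filter_Ioc_mono (by gcongr; exact_mod_cast hBq))
  have hhigh : (#{n ∈ Ioc a (a + L) | P n} : ℝ) ≤ #{n ∈ Ioc a (a + (B + 1 : ℕ) * q) | P n} :=
    Nat.cast_le.2 (card_filter_Ioc_mono (by gcongr; exact_mod_cast hLB.le))
  have hBlow := abs_le.1 (abs_card_filter_Ioc_mul_sub_le hblock a B)
  have hBhigh := abs_le.1 (abs_card_filter_Ioc_mul_sub_le hblock a (B + 1))
  push_cast at hBhigh hhigh
  rw [abs_le]
  constructor <;> nlinarith

theorem tendsto_card_filter_Ioc_div (hρ : 0 ≤ ρ)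
    (hblocks : ∀ Q : ℕ, ∃ q : ℕ, Q < q ∧
      ∀ a : ℤ, |(#{n ∈ Ioc a (a + q) | P n} : ℝ) - q * ρ| ≤ C)
    {ι : Type*} {l : Filter ι} {a : ι → ℤ} {L : ι → ℕ} (hL : Tendsto L l atTop) :
    Tendsto (fun i => (#{n ∈ Ioc (a i) (a i + L i) | P n} : ℝ) / L i) l (𝓝 ρ) := by
  rw [Metric.tendsto_nhds]
  intro δ hδ
  obtain ⟨Q, hQ⟩ := exists_nat_gt (2 * C / δ)
  obtain ⟨q, hQq, hblock⟩ := hblocks Q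
  have hC : 0 ≤ C := (abs_nonneg _).trans (hblock 0)
  have hqR : 2 * C / δ < q := hQ.trans (by exact_mod_cast hQq)
  have hq : 0 < q := by
    have : (0 : ℝ) < q := (div_nonneg (by positivity) hδ.le).trans_lt hqR
    exact_mod_cast this
  obtain ⟨M, hM⟩ := exists_nat_gt (2 * (q * ρ + C) / δ)
  filter_upwards [hL.eventually (eventually_ge_atTop (M + 1))] with i hi
  have hLpos : (0 : ℝ) < L i := by exact_mod_cast M.succ_pos.trans_le hi
  have hLM : 2 * (q * ρ + C) / δ < L i :=
    hM.trans (by exact_mod_cast M.lt_succ_self.trans_le hi)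
  rw [Real.dist_eq, div_sub' hLpos.ne', abs_div, abs_of_pos hLpos, div_lt_iff₀ hLpos]
  rw [div_lt_iff₀ hδ] at hqR hLM
  have hsmall : L i * C / q < δ * L i / 2 := by
    rw [div_lt_iff₀ (by exact_mod_cast hq)]; nlinarith
  calc _ ≤ L i * C / q + q * ρ + C := by
        simpa [mul_comm] using abs_card_filter_Ioc_sub_le hq hρ hblock (a i) (L i)
    _ < δ * L i := by nlinarith

end Density

open Classical in
theorem tendsto_card_filter_bohrSet_div {α : ℝ} (hα : Irrational α) {r : ℝ} (hr₀ : 0 ≤ r)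
    (hr : r ≤ 1 / 2) {ι : Type*} {l : Filter ι} {a : ι → ℤ} {L : ι → ℕ}
    (hL : Tendsto L l atTop) :
    Tendsto (fun i => (#{n ∈ Ioc (a i) (a i + L i) | n ∈ bohrSet α r} : ℝ) / L i) l
      (𝓝 (2 * r)) := by
  refine tendsto_card_filter_Ioc_div (C := 3) (by linarith) (fun Q => ?_) hL
  obtain ⟨q, p, hQq, hpq, hθ⟩ := hα.exists_isCoprime_abs_mul_sub_le Q
  exact ⟨q, hQq, abs_card_filter_bohrSet_sub_le (by omega) hpq hθ hr₀ hr⟩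

/-- For `0 < ε < 1/4` and `A = {n ∈ ℤ : {n√2} < ε}`, the set `(A-A)+(A-A)` has
density `4ε < 1`; in particular it is a proper subset of `ℤ`. -/
theorem stmt11 (ε : ℝ) (h0 : 0 < ε) (h1 : ε < 1 / 4)
    (A B : Set ℤ)
    (hA : A = {n : ℤ | Int.fract ((n : ℝ) * Real.sqrt 2) < ε})
    (hB : B = {n : ℤ | ∃ a ∈ A, ∃ b ∈ A, ∃ c ∈ A, ∃ d ∈ A, n = a - b + c - d}) :
    Filter.Tendsto
      (fun n : ℕ => (((B ∩ {x : ℤ | |x| ≤ (n : ℤ)}).ncard : ℝ)) / (2 * (n : ℝ) + 1))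
      Filter.atTop (nhds (4 * ε)) ∧
    4 * ε < 1 ∧ B ≠ Set.univ := by
  classical
  have hsumset : B = (A - A) + (A - A) := by
    rw [hB]
    ext n
    simp only [Set.mem_add, Set.mem_sub, Set.mem_ofPred_eq]
    constructor
    · rintro ⟨a, ha, b, hb, c, hc, d, hd, rfl⟩
      exact ⟨_, ⟨a, ha, b, hb, rfl⟩, _, ⟨c, hc, d, hd, rfl⟩, by ring⟩
    · rintro ⟨_, ⟨a, ha, b, hb, rfl⟩, _, ⟨c, hc, d, hd, rfl⟩, rfl⟩
      exact ⟨a, ha, b, hb, c, hc, d, hd, by ring⟩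
  have hBohr : B = bohrSet (Real.sqrt 2) (2 * ε) := by
    rw [hsumset, hA, setOf_fract_lt_sub_self, bohrSet_add_bohrSet irrational_sqrt_two h0 h0,
      two_mul]
  have hwindow (S : Set ℤ) (N : ℕ) : ((S ∩ {x : ℤ | |x| ≤ (N : ℤ)}).ncard : ℝ) =
      #{n ∈ Ioc (-N - 1 : ℤ) ((-N - 1 : ℤ) + (2 * N + 1 : ℕ)) | n ∈ S} := by
    rw [← Set.ncard_coe_finset]
    congr
    ext x
    simp only [coe_filter, mem_Ioc, Set.mem_inter_iff, Set.mem_ofPred_eq, abs_le]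
    push_cast
    rw [and_comm]
    exact and_congr_left fun _ => by constructor <;> intro h <;> omega
  have hdensity : Tendsto (fun N : ℕ => ((B ∩ {x : ℤ | |x| ≤ (N : ℤ)}).ncard : ℝ) / (2 * N + 1))
      atTop (𝓝 (4 * ε)) := by
    have := tendsto_card_filter_bohrSet_div irrational_sqrt_two (r := 2 * ε) (by linarith)
      (by linarith) (a := fun N : ℕ => -N - 1)
      (tendsto_atTop_mono (fun N => show N ≤ 2 * N + 1 by omega) tendsto_id)
    simp_rw [hwindow, hBohr]
    convert this using 2 <;> push_cast <;> ring
  refine ⟨hdensity, by linarith, fun hBuniv => ?_⟩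
  have hone : Tendsto (fun N : ℕ => ((B ∩ {x : ℤ | |x| ≤ (N : ℤ)}).ncard : ℝ) / (2 * N + 1))
      atTop (𝓝 1) := by
    refine tendsto_const_nhds.congr fun N => ?_
    rw [hwindow, hBuniv]
    simp only [Set.mem_univ, filter_true, Int.card_Ioc, add_sub_cancel_left, Int.toNat_natCast]
    push_cast
    exact (div_self (by positivity)).symm
  linarith [tendsto_nhds_unique hdensity hone]
end
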